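/- Let u≥3 be odd and k=−3+u/2. For all coweights g=(g₁,g₂), g′=(g₁′,g₂′)∈ℤ², all λ,λ′∈P⁺ᵘ and all μ,μ′,ν,ν′∈ℝ, setting γ=γ(λ,μ,ν)=(j_λ+μ+u/6)·α₂+(ν−u/6)·α₃ and γ′=γ(λ′,μ′,ν′): S^{BP}_{∇^{g₂}(λ),∇^{g₂′}(λ′)} · S^G_{(g₂,μ),(g₂′,μ′)} · S^Π_{(g₁+g₂, ν+g₁u/6),(g₁′+g₂′, ν′+g₁′u/6)} = e^{−2πi(⟨g,g′⟩u/2 + ⟨γ,g′⟩ + ⟨g,γ′⟩)}·S^{BP}_{λ,λ′}. (The fully relaxed sl₃ S-matrix, built by inverse quantum hamiltonian reduction from Bershadsky–Polyakov, bosonic-ghost and half-lattice S-matrices, equals a pure phase depending only on sl₃ data times the Bershadsky–Polyakov S-matrix.) -/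
import Mathlib


noncomputable section

open Complex

/-- The six elements of the Weyl group `S₃` of sl₃ acting on weights in
Dynkin-label coordinates: `id, w₁, w₂, w₁w₂, w₂w₁, w₃`. -/
def wmap (w : Fin 6) (x : ℂ × ℂ) : ℂ × ℂ :=
  ![x, (-x.1, x.1 + x.2), (x.1 + x.2, -x.2), (-x.1 - x.2, x.1),
    (x.2, -x.1 - x.2), (-x.2, -x.1)] w

/-- The signs of the six Weyl group elements. -/
def wdet : Fin 6 → ℤ := ![1, -1, -1, 1, 1, -1]

/-- The normalised invariant bilinear form of sl₃ in Dynkin-label coordinates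
(the same formula gives the form on coweights and the weight/coweight pairing). -/
def bform (x y : ℂ × ℂ) : ℂ :=
  (2 * x.1 * y.1 + x.1 * y.2 + x.2 * y.1 + 2 * x.2 * y.2) / 3

/-- The Weyl vector `ρ = (1,1)`. -/
def rho : ℂ × ℂ := (1, 1)

/-- The set `P⁺ᵘ` of triples of nonnegative integers summing to `u-3`. -/
def Pplus (u : ℕ) : Finset (ℕ × ℕ × ℕ) :=
  (Finset.range u ×ˢ Finset.range u ×ˢ Finset.range u).filter
    (fun l => l.1 + l.2.1 + l.2.2 = u - 3)

/-- The finite part `λ̄ = (λ₁,λ₂)` of a triple `λ = (λ₀,λ₁,λ₂)`. -/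
def bar (l : ℕ × ℕ × ℕ) : ℂ × ℂ := ((l.2.1 : ℂ), (l.2.2 : ℂ))

/-- `j_λ = -(λ₁-λ₂)/3`. -/
def jBP (l : ℕ × ℕ × ℕ) : ℂ := -(((l.2.1 : ℂ) - (l.2.2 : ℂ)) / 3)

/-- The Bershadsky–Polyakov minimal-model S-matrix. -/
def SBP (u : ℕ) (l l' : ℕ × ℕ × ℕ) : ℂ :=
  (I / (Real.sqrt 3 * u)) * exp (2 * Real.pi * I * (jBP l + jBP l' - (u : ℂ) / 3)) *
    ∑ w : Fin 6, (wdet w : ℂ) *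
      exp (-4 * Real.pi * I * bform (wmap w (bar l + rho)) (bar l' + rho) / u)

/-- `∇(λ₀,λ₁,λ₂) = (λ₁,λ₂,λ₀)`. -/
def nabla (l : ℕ × ℕ × ℕ) : ℕ × ℕ × ℕ := (l.2.1, l.2.2, l.1)

/-- The `ℤ`-action `n ↦ ∇ⁿ` (well defined since `∇³ = id`). -/
def nablaZ (n : ℤ) (l : ℕ × ℕ × ℕ) : ℕ × ℕ × ℕ := nabla^[(n % 3).toNat] l

/-- The bosonic-ghost S-matrix
`S^G_{(ℓ,μ),(ℓ′,μ′)} = (-1)^{ℓ+ℓ′}·e^{-2πi(ℓμ′+ℓ′μ)}`. -/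
def SG (a a' : ℤ) (m m' : ℝ) : ℂ :=
  (-1 : ℂ) ^ (a + a') * exp (-2 * Real.pi * I * ((a : ℂ) * (m' : ℂ) + (a' : ℂ) * (m : ℂ)))

/-- The half-lattice S-matrix
`S^Π_{(m,ν),(m′,ν′)} = e^{2πi(m+m′)k/3}·e^{-2πi(mν′+m′ν)}`, where `k = -3+u/2`. -/
def SPi (u : ℕ) (a a' : ℤ) (n n' : ℝ) : ℂ :=
  exp (2 * Real.pi * I * ((a : ℂ) + (a' : ℂ)) * (-3 + (u : ℂ) / 2) / 3) *
    exp (-2 * Real.pi * I * ((a : ℂ) * (n' : ℂ) + (a' : ℂ) * (n : ℂ)))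

/-- The simple root `α₂ = (-1,2)`. -/
def alpha2 : ℂ × ℂ := (-1, 2)

/-- The highest root `α₃ = (1,1)`. -/
def alpha3 : ℂ × ℂ := (1, 1)

/-- `γ(λ,μ,ν) = (j_λ+μ+u/6)·α₂ + (ν-u/6)·α₃`. -/
def gam (u : ℕ) (l : ℕ × ℕ × ℕ) (m n : ℝ) : ℂ × ℂ :=
  (jBP l + (m : ℂ) + (u : ℂ) / 6) • alpha2 + ((n : ℂ) - (u : ℂ) / 6) • alpha3

/-- Embedding of coweights `(g₁,g₂) ∈ ℤ²` into `ℂ²`. -/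
def cw (g : ℤ × ℤ) : ℂ × ℂ := ((g.1 : ℂ), (g.2 : ℂ))

-- aux
lemma wmap0' (x y : ℂ) : wmap 0 (x, y) = (x, y) := rfl
lemma wmap1' (x y : ℂ) : wmap 1 (x, y) = (-x, x + y) := rfl
lemma wmap2' (x y : ℂ) : wmap 2 (x, y) = (x + y, -y) := rfl
lemma wmap3' (x y : ℂ) : wmap 3 (x, y) = (-x - y, x) := rfl
lemma wmap4' (x y : ℂ) : wmap 4 (x, y) = (y, -x - y) := rfl
lemma wmap5' (x y : ℂ) : wmap 5 (x, y) = (-y, -x) := rfl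
lemma wdet0 : wdet 0 = 1 := rfl
lemma wdet1 : wdet 1 = -1 := rfl
lemma wdet2 : wdet 2 = -1 := rfl
lemma wdet3 : wdet 3 = 1 := rfl
lemma wdet4 : wdet 4 = 1 := rfl
lemma wdet5 : wdet 5 = -1 := rfl

lemma exp_shift (a b : ℂ) (n : ℤ) (h : a = b + n * (2 * Real.pi * I)) : exp a = exp b := by
  rw [h, Complex.exp_add, Complex.exp_int_mul_two_pi_mul_I, mul_one]

lemma mem_Pplus {u : ℕ} {l : ℕ × ℕ × ℕ} (hu : 3 ≤ u) (hl : l ∈ Pplus u) :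
    l.1 + l.2.1 + l.2.2 + 3 = u := by
  simp only [Pplus, Finset.mem_filter, Finset.mem_product, Finset.mem_range] at hl
  omega

lemma nabla_mem {u : ℕ} {l : ℕ × ℕ × ℕ} (hu : 3 ≤ u) (hl : l ∈ Pplus u) :
    nabla l ∈ Pplus u := by
  simp only [Pplus, Finset.mem_filter, Finset.mem_product, Finset.mem_range, nabla] at hl ⊢
  omega

lemma flowL (u : ℕ) (hu : 3 ≤ u) (l l' : ℕ × ℕ × ℕ) (hl : l ∈ Pplus u) :
    SBP u (nabla l) l' =
      exp (2 * (Real.pi : ℂ) * I * ((u : ℂ) / 3 - 1 - (l.2.2 : ℂ))) *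
      (exp (-4 * (Real.pi : ℂ) * I * (((l'.2.1 : ℂ) + 1) + 2 * ((l'.2.2 : ℂ) + 1)) / 3) *
        SBP u l l') := by
  obtain ⟨a, b, c⟩ := l
  obtain ⟨a', b', c'⟩ := l'
  have hu0 : (u : ℂ) ≠ 0 := by
    simp only [ne_eq, Nat.cast_eq_zero]; omega
  have hsum := mem_Pplus hu hl
  have h0 : (a : ℂ) = (u : ℂ) - 3 - (b : ℂ) - (c : ℂ) := by
    have : ((a + b + c + 3 : ℕ) : ℂ) = (u : ℂ) := by rw [hsum]
    push_cast at this
    linear_combination this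
  have hbar : bar (nabla (a, b, c)) + rho = ((c : ℂ) + 1, ((u : ℂ) - 3 - (b : ℂ) - (c : ℂ)) + 1) := by
    rw [← h0]; rfl
  have hbarl : bar (a, b, c) + rho = ((b : ℂ) + 1, (c : ℂ) + 1) := rfl
  have hbar' : bar (a', b', c') + rho = ((b' : ℂ) + 1, (c' : ℂ) + 1) := rfl
  rw [SBP, SBP, hbar, hbarl, hbar']
  simp only [Fin.sum_univ_six, wdet0, wdet1, wdet2, wdet3, wdet4, wdet5,
    Int.cast_one, Int.cast_neg]
  have hph : exp (2 * (Real.pi : ℂ) * I * (jBP (nabla (a, b, c)) + jBP (a', b', c') - (u : ℂ) / 3))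
      = exp (2 * (Real.pi : ℂ) * I * ((u : ℂ) / 3 - 1 - (c : ℂ))) *
        exp (2 * (Real.pi : ℂ) * I * (jBP (a, b, c) + jBP (a', b', c') - (u : ℂ) / 3)) := by
    rw [← Complex.exp_add]
    congr 1
    simp only [jBP, nabla]
    rw [h0]; ring
  rw [hph]
  have e0 : cexp (-4 * (Real.pi:ℂ) * I * bform (wmap 0 ((c:ℂ) + 1, (u:ℂ) - 3 - (b:ℂ) - (c:ℂ) + 1)) ((b':ℂ) + 1, (c':ℂ) + 1) / (u:ℂ))
      = cexp (-4 * (Real.pi:ℂ) * I * (((b':ℂ) + 1) + 2 * ((c':ℂ) + 1)) / 3) *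
        cexp (-4 * (Real.pi:ℂ) * I * bform (wmap 4 ((b:ℂ) + 1, (c:ℂ) + 1)) ((b':ℂ) + 1, (c':ℂ) + 1) / (u:ℂ)) := by
    rw [← Complex.exp_add]
    apply exp_shift _ _ (0 : ℤ)
    simp only [wmap0', wmap1', wmap2', wmap3', wmap4', wmap5', bform]
    push_cast
    field_simp
    ring
  have e1 : cexp (-4 * (Real.pi:ℂ) * I * bform (wmap 1 ((c:ℂ) + 1, (u:ℂ) - 3 - (b:ℂ) - (c:ℂ) + 1)) ((b':ℂ) + 1, (c':ℂ) + 1) / (u:ℂ))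
      = cexp (-4 * (Real.pi:ℂ) * I * (((b':ℂ) + 1) + 2 * ((c':ℂ) + 1)) / 3) *
        cexp (-4 * (Real.pi:ℂ) * I * bform (wmap 5 ((b:ℂ) + 1, (c:ℂ) + 1)) ((b':ℂ) + 1, (c':ℂ) + 1) / (u:ℂ)) := by
    rw [← Complex.exp_add]
    apply exp_shift _ _ (0 : ℤ)
    simp only [wmap0', wmap1', wmap2', wmap3', wmap4', wmap5', bform]
    push_cast
    field_simp
    ring
  have e2 : cexp (-4 * (Real.pi:ℂ) * I * bform (wmap 2 ((c:ℂ) + 1, (u:ℂ) - 3 - (b:ℂ) - (c:ℂ) + 1)) ((b':ℂ) + 1, (c':ℂ) + 1) / (u:ℂ))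
      = cexp (-4 * (Real.pi:ℂ) * I * (((b':ℂ) + 1) + 2 * ((c':ℂ) + 1)) / 3) *
        cexp (-4 * (Real.pi:ℂ) * I * bform (wmap 1 ((b:ℂ) + 1, (c:ℂ) + 1)) ((b':ℂ) + 1, (c':ℂ) + 1) / (u:ℂ)) := by
    rw [← Complex.exp_add]
    apply exp_shift _ _ (2*((c':ℤ)+1))
    simp only [wmap0', wmap1', wmap2', wmap3', wmap4', wmap5', bform]
    push_cast
    field_simp
    ring
  have e3 : cexp (-4 * (Real.pi:ℂ) * I * bform (wmap 3 ((c:ℂ) + 1, (u:ℂ) - 3 - (b:ℂ) - (c:ℂ) + 1)) ((b':ℂ) + 1, (c':ℂ) + 1) / (u:ℂ))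
      = cexp (-4 * (Real.pi:ℂ) * I * (((b':ℂ) + 1) + 2 * ((c':ℂ) + 1)) / 3) *
        cexp (-4 * (Real.pi:ℂ) * I * bform (wmap 0 ((b:ℂ) + 1, (c:ℂ) + 1)) ((b':ℂ) + 1, (c':ℂ) + 1) / (u:ℂ)) := by
    rw [← Complex.exp_add]
    apply exp_shift _ _ (2*((b':ℤ)+(c':ℤ)+2))
    simp only [wmap0', wmap1', wmap2', wmap3', wmap4', wmap5', bform]
    push_cast
    field_simp
    ring
  have e4 : cexp (-4 * (Real.pi:ℂ) * I * bform (wmap 4 ((c:ℂ) + 1, (u:ℂ) - 3 - (b:ℂ) - (c:ℂ) + 1)) ((b':ℂ) + 1, (c':ℂ) + 1) / (u:ℂ))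
      = cexp (-4 * (Real.pi:ℂ) * I * (((b':ℂ) + 1) + 2 * ((c':ℂ) + 1)) / 3) *
        cexp (-4 * (Real.pi:ℂ) * I * bform (wmap 3 ((b:ℂ) + 1, (c:ℂ) + 1)) ((b':ℂ) + 1, (c':ℂ) + 1) / (u:ℂ)) := by
    rw [← Complex.exp_add]
    apply exp_shift _ _ (2*((c':ℤ)+1))
    simp only [wmap0', wmap1', wmap2', wmap3', wmap4', wmap5', bform]
    push_cast
    field_simp
    ring
  have e5 : cexp (-4 * (Real.pi:ℂ) * I * bform (wmap 5 ((c:ℂ) + 1, (u:ℂ) - 3 - (b:ℂ) - (c:ℂ) + 1)) ((b':ℂ) + 1, (c':ℂ) + 1) / (u:ℂ))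
      = cexp (-4 * (Real.pi:ℂ) * I * (((b':ℂ) + 1) + 2 * ((c':ℂ) + 1)) / 3) *
        cexp (-4 * (Real.pi:ℂ) * I * bform (wmap 2 ((b:ℂ) + 1, (c:ℂ) + 1)) ((b':ℂ) + 1, (c':ℂ) + 1) / (u:ℂ)) := by
    rw [← Complex.exp_add]
    apply exp_shift _ _ (2*((b':ℤ)+(c':ℤ)+2))
    simp only [wmap0', wmap1', wmap2', wmap3', wmap4', wmap5', bform]
    push_cast
    field_simp
    ring
  rw [e0, e1, e2, e3, e4, e5]
  ring

lemma flowR (u : ℕ) (hu : 3 ≤ u) (l l' : ℕ × ℕ × ℕ) (hl' : l' ∈ Pplus u) :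
    SBP u l (nabla l') =
      exp (2 * (Real.pi : ℂ) * I * ((u : ℂ) / 3 - 1 - (l'.2.2 : ℂ))) *
      (exp (-4 * (Real.pi : ℂ) * I * (((l.2.1 : ℂ) + 1) + 2 * ((l.2.2 : ℂ) + 1)) / 3) *
        SBP u l l') := by
  obtain ⟨a, b, c⟩ := l
  obtain ⟨a', b', c'⟩ := l'
  have hu0 : (u : ℂ) ≠ 0 := by
    simp only [ne_eq, Nat.cast_eq_zero]; omega
  have hsum := mem_Pplus hu hl'
  have h0 : (a' : ℂ) = (u : ℂ) - 3 - (b' : ℂ) - (c' : ℂ) := by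
    have : ((a' + b' + c' + 3 : ℕ) : ℂ) = (u : ℂ) := by rw [hsum]
    push_cast at this
    linear_combination this
  have hbar : bar (nabla (a', b', c')) + rho = ((c' : ℂ) + 1, ((u : ℂ) - 3 - (b' : ℂ) - (c' : ℂ)) + 1) := by
    rw [← h0]; rfl
  have hbarl : bar (a, b, c) + rho = ((b : ℂ) + 1, (c : ℂ) + 1) := rfl
  have hbar' : bar (a', b', c') + rho = ((b' : ℂ) + 1, (c' : ℂ) + 1) := rfl
  rw [SBP, SBP, hbar, hbarl, hbar']
  simp only [Fin.sum_univ_six, wdet0, wdet1, wdet2, wdet3, wdet4, wdet5,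
    Int.cast_one, Int.cast_neg]
  have hph : exp (2 * (Real.pi : ℂ) * I * (jBP (a, b, c) + jBP (nabla (a', b', c')) - (u : ℂ) / 3))
      = exp (2 * (Real.pi : ℂ) * I * ((u : ℂ) / 3 - 1 - (c' : ℂ))) *
        exp (2 * (Real.pi : ℂ) * I * (jBP (a, b, c) + jBP (a', b', c') - (u : ℂ) / 3)) := by
    rw [← Complex.exp_add]
    congr 1
    simp only [jBP, nabla]
    rw [h0]; ring
  rw [hph]
  have e0 : cexp (-4 * (Real.pi:ℂ) * I * bform (wmap 0 ((b:ℂ) + 1, (c:ℂ) + 1)) ((c':ℂ) + 1, (u:ℂ) - 3 - (b':ℂ) - (c':ℂ) + 1) / (u:ℂ))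
      = cexp (-4 * (Real.pi:ℂ) * I * (((b:ℂ) + 1) + 2 * ((c:ℂ) + 1)) / 3) *
        cexp (-4 * (Real.pi:ℂ) * I * bform (wmap 3 ((b:ℂ) + 1, (c:ℂ) + 1)) ((b':ℂ) + 1, (c':ℂ) + 1) / (u:ℂ)) := by
    rw [← Complex.exp_add]
    apply exp_shift _ _ (0 : ℤ)
    simp only [wmap0', wmap1', wmap2', wmap3', wmap4', wmap5', bform]
    push_cast
    field_simp
    ring
  have e1 : cexp (-4 * (Real.pi:ℂ) * I * bform (wmap 1 ((b:ℂ) + 1, (c:ℂ) + 1)) ((c':ℂ) + 1, (u:ℂ) - 3 - (b':ℂ) - (c':ℂ) + 1) / (u:ℂ))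
      = cexp (-4 * (Real.pi:ℂ) * I * (((b:ℂ) + 1) + 2 * ((c:ℂ) + 1)) / 3) *
        cexp (-4 * (Real.pi:ℂ) * I * bform (wmap 5 ((b:ℂ) + 1, (c:ℂ) + 1)) ((b':ℂ) + 1, (c':ℂ) + 1) / (u:ℂ)) := by
    rw [← Complex.exp_add]
    apply exp_shift _ _ (0 : ℤ)
    simp only [wmap0', wmap1', wmap2', wmap3', wmap4', wmap5', bform]
    push_cast
    field_simp
    ring
  have e2 : cexp (-4 * (Real.pi:ℂ) * I * bform (wmap 2 ((b:ℂ) + 1, (c:ℂ) + 1)) ((c':ℂ) + 1, (u:ℂ) - 3 - (b':ℂ) - (c':ℂ) + 1) / (u:ℂ))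
      = cexp (-4 * (Real.pi:ℂ) * I * (((b:ℂ) + 1) + 2 * ((c:ℂ) + 1)) / 3) *
        cexp (-4 * (Real.pi:ℂ) * I * bform (wmap 1 ((b:ℂ) + 1, (c:ℂ) + 1)) ((b':ℂ) + 1, (c':ℂ) + 1) / (u:ℂ)) := by
    rw [← Complex.exp_add]
    apply exp_shift _ _ (2*((c:ℤ)+1))
    simp only [wmap0', wmap1', wmap2', wmap3', wmap4', wmap5', bform]
    push_cast
    field_simp
    ring
  have e3 : cexp (-4 * (Real.pi:ℂ) * I * bform (wmap 3 ((b:ℂ) + 1, (c:ℂ) + 1)) ((c':ℂ) + 1, (u:ℂ) - 3 - (b':ℂ) - (c':ℂ) + 1) / (u:ℂ))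
      = cexp (-4 * (Real.pi:ℂ) * I * (((b:ℂ) + 1) + 2 * ((c:ℂ) + 1)) / 3) *
        cexp (-4 * (Real.pi:ℂ) * I * bform (wmap 4 ((b:ℂ) + 1, (c:ℂ) + 1)) ((b':ℂ) + 1, (c':ℂ) + 1) / (u:ℂ)) := by
    rw [← Complex.exp_add]
    apply exp_shift _ _ (2*((c:ℤ)+1))
    simp only [wmap0', wmap1', wmap2', wmap3', wmap4', wmap5', bform]
    push_cast
    field_simp
    ring
  have e4 : cexp (-4 * (Real.pi:ℂ) * I * bform (wmap 4 ((b:ℂ) + 1, (c:ℂ) + 1)) ((c':ℂ) + 1, (u:ℂ) - 3 - (b':ℂ) - (c':ℂ) + 1) / (u:ℂ))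
      = cexp (-4 * (Real.pi:ℂ) * I * (((b:ℂ) + 1) + 2 * ((c:ℂ) + 1)) / 3) *
        cexp (-4 * (Real.pi:ℂ) * I * bform (wmap 0 ((b:ℂ) + 1, (c:ℂ) + 1)) ((b':ℂ) + 1, (c':ℂ) + 1) / (u:ℂ)) := by
    rw [← Complex.exp_add]
    apply exp_shift _ _ (2*((b:ℤ)+(c:ℤ)+2))
    simp only [wmap0', wmap1', wmap2', wmap3', wmap4', wmap5', bform]
    push_cast
    field_simp
    ring
  have e5 : cexp (-4 * (Real.pi:ℂ) * I * bform (wmap 5 ((b:ℂ) + 1, (c:ℂ) + 1)) ((c':ℂ) + 1, (u:ℂ) - 3 - (b':ℂ) - (c':ℂ) + 1) / (u:ℂ))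
      = cexp (-4 * (Real.pi:ℂ) * I * (((b:ℂ) + 1) + 2 * ((c:ℂ) + 1)) / 3) *
        cexp (-4 * (Real.pi:ℂ) * I * bform (wmap 2 ((b:ℂ) + 1, (c:ℂ) + 1)) ((b':ℂ) + 1, (c':ℂ) + 1) / (u:ℂ)) := by
    rw [← Complex.exp_add]
    apply exp_shift _ _ (2*((b:ℤ)+(c:ℤ)+2))
    simp only [wmap0', wmap1', wmap2', wmap3', wmap4', wmap5', bform]
    push_cast
    field_simp
    ring
  rw [e0, e1, e2, e3, e4, e5]
  ring

lemma neg_one_zpow_eq (n : ℤ) : ((-1 : ℂ)) ^ n = exp ((n : ℂ) * ((Real.pi : ℂ) * I)) := by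
  rw [Complex.exp_int_mul, Complex.exp_pi_mul_I]

/-- The fully relaxed sl₃ S-matrix, built by inverse quantum hamiltonian
reduction from the Bershadsky–Polyakov, bosonic-ghost and half-lattice
S-matrices, equals a pure phase depending only on sl₃ data times the
Bershadsky–Polyakov S-matrix. -/
theorem stmt12 (u : ℕ) (hu : 3 ≤ u) (hodd : Odd u)
    (g g' : ℤ × ℤ) (l l' : ℕ × ℕ × ℕ)
    (hl : l ∈ Pplus u) (hl' : l' ∈ Pplus u)
    (μ μ' ν ν' : ℝ) :
    SBP u (nablaZ g.2 l) (nablaZ g'.2 l') * SG g.2 g'.2 μ μ' *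
      SPi u (g.1 + g.2) (g'.1 + g'.2) (ν + (g.1 : ℝ) * u / 6) (ν' + (g'.1 : ℝ) * u / 6)
    = exp (-2 * Real.pi * I *
        (bform (cw g) (cw g') * u / 2 + bform (gam u l μ ν) (cw g')
          + bform (cw g) (gam u l' μ' ν'))) * SBP u l l' := by
  obtain ⟨g1, g2⟩ := g
  obtain ⟨g1', g2'⟩ := g'
  obtain ⟨t, ht⟩ := hodd
  obtain ⟨a, b, c⟩ := l
  obtain ⟨a', b', c'⟩ := l'
  have hsum := mem_Pplus hu hl
  have hsum' := mem_Pplus hu hl'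
  have h0 : (a : ℂ) = (u : ℂ) - 3 - (b : ℂ) - (c : ℂ) := by
    have : ((a + b + c + 3 : ℕ) : ℂ) = (u : ℂ) := by rw [hsum]
    push_cast at this
    linear_combination this
  have h0' : (a' : ℂ) = (u : ℂ) - 3 - (b' : ℂ) - (c' : ℂ) := by
    have : ((a' + b' + c' + 3 : ℕ) : ℂ) = (u : ℂ) := by rw [hsum']
    push_cast at this
    linear_combination this
  have hu2 : (u : ℂ) = 2 * (t : ℂ) + 1 := by
    have : ((2 * t + 1 : ℕ) : ℂ) = (u : ℂ) := by rw [← ht]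
    push_cast at this
    linear_combination -this
  have h3 : g2 % 3 = 0 ∨ g2 % 3 = 1 ∨ g2 % 3 = 2 := by omega
  have h3' : g2' % 3 = 0 ∨ g2' % 3 = 1 ∨ g2' % 3 = 2 := by omega
  rcases h3 with hA | hA | hA <;> rcases h3' with hB | hB | hB
  · -- case a = 0, a' = 0
    obtain ⟨q, hq⟩ : ∃ q, g2 = 3 * q + 0 := ⟨g2 / 3, by omega⟩
    obtain ⟨q', hq'⟩ : ∃ q', g2' = 3 * q' + 0 := ⟨g2' / 3, by omega⟩
    have hq2C : (g2 : ℂ) = 3 * (q : ℂ) + 0 := by rw [hq]; push_cast; ring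
    have hq2C' : (g2' : ℂ) = 3 * (q' : ℂ) + 0 := by rw [hq']; push_cast; ring
    have hn : nablaZ g2 (a, b, c) = (a, b, c) := by
      unfold nablaZ
      rw [show (g2 % 3).toNat = 0 from by omega]
      rfl
    have hn' : nablaZ g2' (a', b', c') = (a', b', c') := by
      unfold nablaZ
      rw [show (g2' % 3).toNat = 0 from by omega]
      rfl
    rw [hn, hn']
    have main : SG g2 g2' μ μ' * SPi u (g1 + g2) (g1' + g2') (ν + (g1:ℝ) * (u:ℝ) / 6) (ν' + (g1':ℝ) * (u:ℝ) / 6)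
        = exp (-2 * (Real.pi:ℂ) * I *
            (bform (cw (g1, g2)) (cw (g1', g2')) * (u:ℂ) / 2 + bform (gam u (a, b, c) μ ν) (cw (g1', g2'))
              + bform (cw (g1, g2)) (gam u (a', b', c') μ' ν'))) := by
      simp only [SG, SPi, gam, cw, alpha2, alpha3, jBP, bform, rho, Prod.smul_mk,
        smul_eq_mul, Prod.mk_add_mk, neg_one_zpow_eq]
      simp only [mul_assoc, ← Complex.exp_add]
      apply exp_shift _ _ ((-1)*g1' + (-1)*g1 + (-1)*q' + (1)*q'*(t:ℤ) + (1)*q'*(c:ℤ) + (-1)*q'*(b:ℤ) + (-1)*q + (1)*q*(t:ℤ) + (1)*q*(c':ℤ) + (-1)*q*(b':ℤ) + (3)*q*q' + (6)*q*q'*(t:ℤ))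
      push_cast
      simp only [h0, h0', hq2C, hq2C', hu2]
      ring
    simp only [nabla]
    linear_combination (SBP u (a, b, c) (a', b', c')) * main
  · -- case a = 0, a' = 1
    obtain ⟨q, hq⟩ : ∃ q, g2 = 3 * q + 0 := ⟨g2 / 3, by omega⟩
    obtain ⟨q', hq'⟩ : ∃ q', g2' = 3 * q' + 1 := ⟨g2' / 3, by omega⟩
    have hq2C : (g2 : ℂ) = 3 * (q : ℂ) + 0 := by rw [hq]; push_cast; ring
    have hq2C' : (g2' : ℂ) = 3 * (q' : ℂ) + 1 := by rw [hq']; push_cast; ring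
    have hn : nablaZ g2 (a, b, c) = (a, b, c) := by
      unfold nablaZ
      rw [show (g2 % 3).toNat = 0 from by omega]
      rfl
    have hn' : nablaZ g2' (a', b', c') = nabla (a', b', c') := by
      unfold nablaZ
      rw [show (g2' % 3).toNat = 1 from by omega]
      rfl
    rw [hn, hn']
    rw [flowR u hu (a, b, c) (a', b', c') hl']
    have main : exp (2 * (Real.pi:ℂ) * I * ((u:ℂ) / 3 - 1 - (c':ℂ))) * exp (-4 * (Real.pi:ℂ) * I * (((b:ℂ) + 1) + 2 * ((c:ℂ) + 1)) / 3) * SG g2 g2' μ μ' * SPi u (g1 + g2) (g1' + g2') (ν + (g1:ℝ) * (u:ℝ) / 6) (ν' + (g1':ℝ) * (u:ℝ) / 6)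
        = exp (-2 * (Real.pi:ℂ) * I *
            (bform (cw (g1, g2)) (cw (g1', g2')) * (u:ℂ) / 2 + bform (gam u (a, b, c) μ ν) (cw (g1', g2'))
              + bform (cw (g1, g2)) (gam u (a', b', c') μ' ν'))) := by
      simp only [SG, SPi, gam, cw, alpha2, alpha3, jBP, bform, rho, Prod.smul_mk,
        smul_eq_mul, Prod.mk_add_mk, neg_one_zpow_eq]
      simp only [mul_assoc, ← Complex.exp_add]
      apply exp_shift _ _ ((-3) + (1)*(t:ℤ) + (-1)*(c':ℤ) + (-1)*(c:ℤ) + (-1)*(b:ℤ) + (-1)*g1' + (-1)*g1 + (-1)*q' + (1)*q'*(t:ℤ) + (1)*q'*(c:ℤ) + (-1)*q'*(b:ℤ) + (3)*q*(t:ℤ) + (1)*q*(c':ℤ) + (-1)*q*(b':ℤ) + (3)*q*q' + (6)*q*q'*(t:ℤ))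
      push_cast
      simp only [h0, h0', hq2C, hq2C', hu2]
      ring
    simp only [nabla]
    linear_combination (SBP u (a, b, c) (a', b', c')) * main
  · -- case a = 0, a' = 2
    obtain ⟨q, hq⟩ : ∃ q, g2 = 3 * q + 0 := ⟨g2 / 3, by omega⟩
    obtain ⟨q', hq'⟩ : ∃ q', g2' = 3 * q' + 2 := ⟨g2' / 3, by omega⟩
    have hq2C : (g2 : ℂ) = 3 * (q : ℂ) + 0 := by rw [hq]; push_cast; ring
    have hq2C' : (g2' : ℂ) = 3 * (q' : ℂ) + 2 := by rw [hq']; push_cast; ring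
    have hn : nablaZ g2 (a, b, c) = (a, b, c) := by
      unfold nablaZ
      rw [show (g2 % 3).toNat = 0 from by omega]
      rfl
    have hn' : nablaZ g2' (a', b', c') = nabla (nabla (a', b', c')) := by
      unfold nablaZ
      rw [show (g2' % 3).toNat = 2 from by omega]
      rfl
    rw [hn, hn']
    rw [flowR u hu (a, b, c) (nabla (a', b', c')) (nabla_mem hu hl'), flowR u hu (a, b, c) (a', b', c') hl']
    have main : exp (2 * (Real.pi:ℂ) * I * ((u:ℂ) / 3 - 1 - (a':ℂ))) * exp (2 * (Real.pi:ℂ) * I * ((u:ℂ) / 3 - 1 - (c':ℂ))) * exp (-4 * (Real.pi:ℂ) * I * (((b:ℂ) + 1) + 2 * ((c:ℂ) + 1)) / 3) * exp (-4 * (Real.pi:ℂ) * I * (((b:ℂ) + 1) + 2 * ((c:ℂ) + 1)) / 3) * SG g2 g2' μ μ' * SPi u (g1 + g2) (g1' + g2') (ν + (g1:ℝ) * (u:ℝ) / 6) (ν' + (g1':ℝ) * (u:ℝ) / 6)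
        = exp (-2 * (Real.pi:ℂ) * I *
            (bform (cw (g1, g2)) (cw (g1', g2')) * (u:ℂ) / 2 + bform (gam u (a, b, c) μ ν) (cw (g1', g2'))
              + bform (cw (g1, g2)) (gam u (a', b', c') μ' ν'))) := by
      simp only [SG, SPi, gam, cw, alpha2, alpha3, jBP, bform, rho, Prod.smul_mk,
        smul_eq_mul, Prod.mk_add_mk, neg_one_zpow_eq]
      simp only [mul_assoc, ← Complex.exp_add]
      apply exp_shift _ _ ((-4) + (1)*(b':ℤ) + (-2)*(c:ℤ) + (-2)*(b:ℤ) + (-1)*g1' + (-1)*g1 + (-1)*q' + (1)*q'*(t:ℤ) + (1)*q'*(c:ℤ) + (-1)*q'*(b:ℤ) + (1)*q + (5)*q*(t:ℤ) + (1)*q*(c':ℤ) + (-1)*q*(b':ℤ) + (3)*q*q' + (6)*q*q'*(t:ℤ))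
      push_cast
      simp only [h0, h0', hq2C, hq2C', hu2]
      ring
    simp only [nabla]
    linear_combination (SBP u (a, b, c) (a', b', c')) * main
  · -- case a = 1, a' = 0
    obtain ⟨q, hq⟩ : ∃ q, g2 = 3 * q + 1 := ⟨g2 / 3, by omega⟩
    obtain ⟨q', hq'⟩ : ∃ q', g2' = 3 * q' + 0 := ⟨g2' / 3, by omega⟩
    have hq2C : (g2 : ℂ) = 3 * (q : ℂ) + 1 := by rw [hq]; push_cast; ring
    have hq2C' : (g2' : ℂ) = 3 * (q' : ℂ) + 0 := by rw [hq']; push_cast; ring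
    have hn : nablaZ g2 (a, b, c) = nabla (a, b, c) := by
      unfold nablaZ
      rw [show (g2 % 3).toNat = 1 from by omega]
      rfl
    have hn' : nablaZ g2' (a', b', c') = (a', b', c') := by
      unfold nablaZ
      rw [show (g2' % 3).toNat = 0 from by omega]
      rfl
    rw [hn, hn']
    rw [flowL u hu (a, b, c) _ hl]
    have main : exp (2 * (Real.pi:ℂ) * I * ((u:ℂ) / 3 - 1 - (c:ℂ))) * exp (-4 * (Real.pi:ℂ) * I * (((b':ℂ) + 1) + 2 * ((c':ℂ) + 1)) / 3) * SG g2 g2' μ μ' * SPi u (g1 + g2) (g1' + g2') (ν + (g1:ℝ) * (u:ℝ) / 6) (ν' + (g1':ℝ) * (u:ℝ) / 6)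
        = exp (-2 * (Real.pi:ℂ) * I *
            (bform (cw (g1, g2)) (cw (g1', g2')) * (u:ℂ) / 2 + bform (gam u (a, b, c) μ ν) (cw (g1', g2'))
              + bform (cw (g1, g2)) (gam u (a', b', c') μ' ν'))) := by
      simp only [SG, SPi, gam, cw, alpha2, alpha3, jBP, bform, rho, Prod.smul_mk,
        smul_eq_mul, Prod.mk_add_mk, neg_one_zpow_eq]
      simp only [mul_assoc, ← Complex.exp_add]
      apply exp_shift _ _ ((-3) + (1)*(t:ℤ) + (-1)*(c':ℤ) + (-1)*(b':ℤ) + (-1)*(c:ℤ) + (-1)*g1' + (-1)*g1 + (3)*q'*(t:ℤ) + (1)*q'*(c:ℤ) + (-1)*q'*(b:ℤ) + (-1)*q + (1)*q*(t:ℤ) + (1)*q*(c':ℤ) + (-1)*q*(b':ℤ) + (3)*q*q' + (6)*q*q'*(t:ℤ))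
      push_cast
      simp only [h0, h0', hq2C, hq2C', hu2]
      ring
    simp only [nabla]
    linear_combination (SBP u (a, b, c) (a', b', c')) * main
  · -- case a = 1, a' = 1
    obtain ⟨q, hq⟩ : ∃ q, g2 = 3 * q + 1 := ⟨g2 / 3, by omega⟩
    obtain ⟨q', hq'⟩ : ∃ q', g2' = 3 * q' + 1 := ⟨g2' / 3, by omega⟩
    have hq2C : (g2 : ℂ) = 3 * (q : ℂ) + 1 := by rw [hq]; push_cast; ring
    have hq2C' : (g2' : ℂ) = 3 * (q' : ℂ) + 1 := by rw [hq']; push_cast; ring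
    have hn : nablaZ g2 (a, b, c) = nabla (a, b, c) := by
      unfold nablaZ
      rw [show (g2 % 3).toNat = 1 from by omega]
      rfl
    have hn' : nablaZ g2' (a', b', c') = nabla (a', b', c') := by
      unfold nablaZ
      rw [show (g2' % 3).toNat = 1 from by omega]
      rfl
    rw [hn, hn']
    rw [flowL u hu (a, b, c) _ hl, flowR u hu (a, b, c) (a', b', c') hl']
    have main : exp (2 * (Real.pi:ℂ) * I * ((u:ℂ) / 3 - 1 - (c:ℂ))) * exp (-4 * (Real.pi:ℂ) * I * (((c':ℂ) + 1) + 2 * ((a':ℂ) + 1)) / 3) * exp (2 * (Real.pi:ℂ) * I * ((u:ℂ) / 3 - 1 - (c':ℂ))) * exp (-4 * (Real.pi:ℂ) * I * (((b:ℂ) + 1) + 2 * ((c:ℂ) + 1)) / 3) * SG g2 g2' μ μ' * SPi u (g1 + g2) (g1' + g2') (ν + (g1:ℝ) * (u:ℝ) / 6) (ν' + (g1':ℝ) * (u:ℝ) / 6)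
        = exp (-2 * (Real.pi:ℂ) * I *
            (bform (cw (g1, g2)) (cw (g1', g2')) * (u:ℂ) / 2 + bform (gam u (a, b, c) μ ν) (cw (g1', g2'))
              + bform (cw (g1, g2)) (gam u (a', b', c') μ' ν'))) := by
      simp only [SG, SPi, gam, cw, alpha2, alpha3, jBP, bform, rho, Prod.smul_mk,
        smul_eq_mul, Prod.mk_add_mk, neg_one_zpow_eq]
      simp only [mul_assoc, ← Complex.exp_add]
      apply exp_shift _ _ ((-3) + (1)*(b':ℤ) + (-2)*(c:ℤ) + (-1)*(b:ℤ) + (-1)*g1' + (-1)*g1 + (3)*q'*(t:ℤ) + (1)*q'*(c:ℤ) + (-1)*q'*(b:ℤ) + (3)*q*(t:ℤ) + (1)*q*(c':ℤ) + (-1)*q*(b':ℤ) + (3)*q*q' + (6)*q*q'*(t:ℤ))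
      push_cast
      simp only [h0, h0', hq2C, hq2C', hu2]
      ring
    simp only [nabla]
    linear_combination (SBP u (a, b, c) (a', b', c')) * main
  · -- case a = 1, a' = 2
    obtain ⟨q, hq⟩ : ∃ q, g2 = 3 * q + 1 := ⟨g2 / 3, by omega⟩
    obtain ⟨q', hq'⟩ : ∃ q', g2' = 3 * q' + 2 := ⟨g2' / 3, by omega⟩
    have hq2C : (g2 : ℂ) = 3 * (q : ℂ) + 1 := by rw [hq]; push_cast; ring
    have hq2C' : (g2' : ℂ) = 3 * (q' : ℂ) + 2 := by rw [hq']; push_cast; ring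
    have hn : nablaZ g2 (a, b, c) = nabla (a, b, c) := by
      unfold nablaZ
      rw [show (g2 % 3).toNat = 1 from by omega]
      rfl
    have hn' : nablaZ g2' (a', b', c') = nabla (nabla (a', b', c')) := by
      unfold nablaZ
      rw [show (g2' % 3).toNat = 2 from by omega]
      rfl
    rw [hn, hn']
    rw [flowL u hu (a, b, c) _ hl, flowR u hu (a, b, c) (nabla (a', b', c')) (nabla_mem hu hl'), flowR u hu (a, b, c) (a', b', c') hl']
    have main : exp (2 * (Real.pi:ℂ) * I * ((u:ℂ) / 3 - 1 - (c:ℂ))) * exp (-4 * (Real.pi:ℂ) * I * (((a':ℂ) + 1) + 2 * ((b':ℂ) + 1)) / 3) * exp (2 * (Real.pi:ℂ) * I * ((u:ℂ) / 3 - 1 - (a':ℂ))) * exp (2 * (Real.pi:ℂ) * I * ((u:ℂ) / 3 - 1 - (c':ℂ))) * exp (-4 * (Real.pi:ℂ) * I * (((b:ℂ) + 1) + 2 * ((c:ℂ) + 1)) / 3) * exp (-4 * (Real.pi:ℂ) * I * (((b:ℂ) + 1) + 2 * ((c:ℂ) + 1)) / 3) * SG g2 g2' μ μ' * SPi u (g1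 + g2) (g1' + g2') (ν + (g1:ℝ) * (u:ℝ) / 6) (ν' + (g1':ℝ) * (u:ℝ) / 6)
        = exp (-2 * (Real.pi:ℂ) * I *
            (bform (cw (g1, g2)) (cw (g1', g2')) * (u:ℂ) / 2 + bform (gam u (a, b, c) μ ν) (cw (g1', g2'))
              + bform (cw (g1, g2)) (gam u (a', b', c') μ' ν'))) := by
      simp only [SG, SPi, gam, cw, alpha2, alpha3, jBP, bform, rho, Prod.smul_mk,
        smul_eq_mul, Prod.mk_add_mk, neg_one_zpow_eq]
      simp only [mul_assoc, ← Complex.exp_add]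
      apply exp_shift _ _ ((-5) + (1)*(t:ℤ) + (1)*(c':ℤ) + (-3)*(c:ℤ) + (-2)*(b:ℤ) + (-1)*g1' + (-1)*g1 + (3)*q'*(t:ℤ) + (1)*q'*(c:ℤ) + (-1)*q'*(b:ℤ) + (1)*q + (5)*q*(t:ℤ) + (1)*q*(c':ℤ) + (-1)*q*(b':ℤ) + (3)*q*q' + (6)*q*q'*(t:ℤ))
      push_cast
      simp only [h0, h0', hq2C, hq2C', hu2]
      ring
    simp only [nabla]
    linear_combination (SBP u (a, b, c) (a', b', c')) * main
  · -- case a = 2, a' = 0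
    obtain ⟨q, hq⟩ : ∃ q, g2 = 3 * q + 2 := ⟨g2 / 3, by omega⟩
    obtain ⟨q', hq'⟩ : ∃ q', g2' = 3 * q' + 0 := ⟨g2' / 3, by omega⟩
    have hq2C : (g2 : ℂ) = 3 * (q : ℂ) + 2 := by rw [hq]; push_cast; ring
    have hq2C' : (g2' : ℂ) = 3 * (q' : ℂ) + 0 := by rw [hq']; push_cast; ring
    have hn : nablaZ g2 (a, b, c) = nabla (nabla (a, b, c)) := by
      unfold nablaZ
      rw [show (g2 % 3).toNat = 2 from by omega]
      rfl
    have hn' : nablaZ g2' (a', b', c') = (a', b', c') := by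
      unfold nablaZ
      rw [show (g2' % 3).toNat = 0 from by omega]
      rfl
    rw [hn, hn']
    rw [flowL u hu (nabla (a, b, c)) _ (nabla_mem hu hl), flowL u hu (a, b, c) _ hl]
    have main : exp (2 * (Real.pi:ℂ) * I * ((u:ℂ) / 3 - 1 - (a:ℂ))) * exp (-4 * (Real.pi:ℂ) * I * (((b':ℂ) + 1) + 2 * ((c':ℂ) + 1)) / 3) * exp (2 * (Real.pi:ℂ) * I * ((u:ℂ) / 3 - 1 - (c:ℂ))) * exp (-4 * (Real.pi:ℂ) * I * (((b':ℂ) + 1) + 2 * ((c':ℂ) + 1)) / 3) * SG g2 g2' μ μ' * SPi u (g1 + g2) (g1' + g2') (ν + (g1:ℝ) * (u:ℝ) / 6) (ν' + (g1':ℝ) * (u:ℝ) / 6)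
        = exp (-2 * (Real.pi:ℂ) * I *
            (bform (cw (g1, g2)) (cw (g1', g2')) * (u:ℂ) / 2 + bform (gam u (a, b, c) μ ν) (cw (g1', g2'))
              + bform (cw (g1, g2)) (gam u (a', b', c') μ' ν'))) := by
      simp only [SG, SPi, gam, cw, alpha2, alpha3, jBP, bform, rho, Prod.smul_mk,
        smul_eq_mul, Prod.mk_add_mk, neg_one_zpow_eq]
      simp only [mul_assoc, ← Complex.exp_add]
      apply exp_shift _ _ ((-4) + (-2)*(c':ℤ) + (-2)*(b':ℤ) + (1)*(b:ℤ) + (-1)*g1' + (-1)*g1 + (1)*q' + (5)*q'*(t:ℤ) + (1)*q'*(c:ℤ) + (-1)*q'*(b:ℤ) + (-1)*q + (1)*q*(t:ℤ) + (1)*q*(c':ℤ) + (-1)*q*(b':ℤ) + (3)*q*q' + (6)*q*q'*(t:ℤ))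
      push_cast
      simp only [h0, h0', hq2C, hq2C', hu2]
      ring
    simp only [nabla]
    linear_combination (SBP u (a, b, c) (a', b', c')) * main
  · -- case a = 2, a' = 1
    obtain ⟨q, hq⟩ : ∃ q, g2 = 3 * q + 2 := ⟨g2 / 3, by omega⟩
    obtain ⟨q', hq'⟩ : ∃ q', g2' = 3 * q' + 1 := ⟨g2' / 3, by omega⟩
    have hq2C : (g2 : ℂ) = 3 * (q : ℂ) + 2 := by rw [hq]; push_cast; ring
    have hq2C' : (g2' : ℂ) = 3 * (q' : ℂ) + 1 := by rw [hq']; push_cast; ring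
    have hn : nablaZ g2 (a, b, c) = nabla (nabla (a, b, c)) := by
      unfold nablaZ
      rw [show (g2 % 3).toNat = 2 from by omega]
      rfl
    have hn' : nablaZ g2' (a', b', c') = nabla (a', b', c') := by
      unfold nablaZ
      rw [show (g2' % 3).toNat = 1 from by omega]
      rfl
    rw [hn, hn']
    rw [flowL u hu (nabla (a, b, c)) _ (nabla_mem hu hl), flowL u hu (a, b, c) _ hl, flowR u hu (a, b, c) (a', b', c') hl']
    have main : exp (2 * (Real.pi:ℂ) * I * ((u:ℂ) / 3 - 1 - (a:ℂ))) * exp (-4 * (Real.pi:ℂ) * I * (((c':ℂ) + 1) + 2 * ((a':ℂ) + 1)) / 3) * exp (2 * (Real.pi:ℂ) * I * ((u:ℂ) / 3 - 1 - (c:ℂ))) * exp (-4 * (Real.pi:ℂ) * I * (((c':ℂ) + 1) + 2 * ((a':ℂ) + 1)) / 3) * exp (2 * (Real.pi:ℂ) * I * ((u:ℂ) / 3 - 1 - (c':ℂ))) * exp (-4 * (Real.pi:ℂ) * I * (((b:ℂ) + 1) + 2 * ((c:ℂ) + 1)) / 3) * SG g2 g2' μ μ' * SPi u (g1 + g2)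 (g1' + g2') (ν + (g1:ℝ) * (u:ℝ) / 6) (ν' + (g1':ℝ) * (u:ℝ) / 6)
        = exp (-2 * (Real.pi:ℂ) * I *
            (bform (cw (g1, g2)) (cw (g1', g2')) * (u:ℂ) / 2 + bform (gam u (a, b, c) μ ν) (cw (g1', g2'))
              + bform (cw (g1, g2)) (gam u (a', b', c') μ' ν'))) := by
      simp only [SG, SPi, gam, cw, alpha2, alpha3, jBP, bform, rho, Prod.smul_mk,
        smul_eq_mul, Prod.mk_add_mk, neg_one_zpow_eq]
      simp only [mul_assoc, ← Complex.exp_add]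
      apply exp_shift _ _ ((-1) + (-3)*(t:ℤ) + (1)*(c':ℤ) + (2)*(b':ℤ) + (-1)*(c:ℤ) + (-1)*g1' + (-1)*g1 + (1)*q' + (5)*q'*(t:ℤ) + (1)*q'*(c:ℤ) + (-1)*q'*(b:ℤ) + (3)*q*(t:ℤ) + (1)*q*(c':ℤ) + (-1)*q*(b':ℤ) + (3)*q*q' + (6)*q*q'*(t:ℤ))
      push_cast
      simp only [h0, h0', hq2C, hq2C', hu2]
      ring
    simp only [nabla]
    linear_combination (SBP u (a, b, c) (a', b', c')) * main
  · -- case a = 2, a' = 2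
    obtain ⟨q, hq⟩ : ∃ q, g2 = 3 * q + 2 := ⟨g2 / 3, by omega⟩
    obtain ⟨q', hq'⟩ : ∃ q', g2' = 3 * q' + 2 := ⟨g2' / 3, by omega⟩
    have hq2C : (g2 : ℂ) = 3 * (q : ℂ) + 2 := by rw [hq]; push_cast; ring
    have hq2C' : (g2' : ℂ) = 3 * (q' : ℂ) + 2 := by rw [hq']; push_cast; ring
    have hn : nablaZ g2 (a, b, c) = nabla (nabla (a, b, c)) := by
      unfold nablaZ
      rw [show (g2 % 3).toNat = 2 from by omega]
      rfl
    have hn' : nablaZ g2' (a', b', c') = nabla (nabla (a', b', c')) := by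
      unfold nablaZ
      rw [show (g2' % 3).toNat = 2 from by omega]
      rfl
    rw [hn, hn']
    rw [flowL u hu (nabla (a, b, c)) _ (nabla_mem hu hl), flowL u hu (a, b, c) _ hl, flowR u hu (a, b, c) (nabla (a', b', c')) (nabla_mem hu hl'), flowR u hu (a, b, c) (a', b', c') hl']
    have main : exp (2 * (Real.pi:ℂ) * I * ((u:ℂ) / 3 - 1 - (a:ℂ))) * exp (-4 * (Real.pi:ℂ) * I * (((a':ℂ) + 1) + 2 * ((b':ℂ) + 1)) / 3) * exp (2 * (Real.pi:ℂ) * I * ((u:ℂ) / 3 - 1 - (c:ℂ))) * exp (-4 * (Real.pi:ℂ) * I * (((a':ℂ) + 1) + 2 * ((b':ℂ) + 1)) / 3) * exp (2 * (Real.pi:ℂ) * I * ((u:ℂ) / 3 - 1 - (a':ℂ))) * exp (2 * (Real.pi:ℂ) * I * ((u:ℂ) / 3 - 1 - (c':ℂ))) * exp (-4 * (Real.pi:ℂ) * I * (((b:ℂ) + 1) + 2 * ((c:ℂ) + 1)) / 3) * exp (-4 * (Real.pi:ℂ) * I * (((b:ℂ) + 1) + 2 * ((c:ℂ) + 1)) /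 3) * SG g2 g2' μ μ' * SPi u (g1 + g2) (g1' + g2') (ν + (g1:ℝ) * (u:ℝ) / 6) (ν' + (g1':ℝ) * (u:ℝ) / 6)
        = exp (-2 * (Real.pi:ℂ) * I *
            (bform (cw (g1, g2)) (cw (g1', g2')) * (u:ℂ) / 2 + bform (gam u (a, b, c) μ ν) (cw (g1', g2'))
              + bform (cw (g1, g2)) (gam u (a', b', c') μ' ν'))) := by
      simp only [SG, SPi, gam, cw, alpha2, alpha3, jBP, bform, rho, Prod.smul_mk,
        smul_eq_mul, Prod.mk_add_mk, neg_one_zpow_eq]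
      simp only [mul_assoc, ← Complex.exp_add]
      apply exp_shift _ _ ((-4) + (2)*(c':ℤ) + (-1)*(b':ℤ) + (-2)*(c:ℤ) + (-1)*(b:ℤ) + (-1)*g1' + (-1)*g1 + (1)*q' + (5)*q'*(t:ℤ) + (1)*q'*(c:ℤ) + (-1)*q'*(b:ℤ) + (1)*q + (5)*q*(t:ℤ) + (1)*q*(c':ℤ) + (-1)*q*(b':ℤ) + (3)*q*q' + (6)*q*q'*(t:ℤ))
      push_cast
      simp only [h0, h0', hq2C, hq2C', hu2]
      ring
    simp only [nabla]
    linear_combination (SBP u (a, b, c) (a', b', c')) * main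

end
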